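/- For any real matrices A ∈ ℝ^{m×p}, B ∈ ℝ^{p×n}, any k ∈ [1, min{m,p,n}], and any s > 0, the ordered singular values satisfy ∑_{i=1}^k σ_i^s(AB) ≤ ∑_{i=1}^k (σ_i(A)σ_i(B))^s. -/

import Mathlib

open Matrix

/-- The `k`th multiplicative compound of a matrix: the matrix of all `k × k` minors,
indexed by the sets of `k` row indices and `k` column indices (taken in increasing order). -/
noncomputable def mulCompound (k : ℕ) {n m : ℕ} (A : Matrix (Fin n) (Fin m) ℝ) :
    Matrix {s : Finset (Fin n) // s.card = k} {s : Finset (Fin m) // s.card = k} ℝ :=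
  fun r c =>
    (A.submatrix (fun i => ((r.1.orderIsoOfFin r.2) i : Fin n))
      (fun j => ((c.1.orderIsoOfFin c.2) j : Fin m))).det

/-- The `k`th additive compound: the derivative at `ε = 0` of `(I + ε A)^{(k)}`. -/
noncomputable def addCompound (k : ℕ) {n : ℕ} (A : Matrix (Fin n) (Fin n) ℝ) :
    Matrix {s : Finset (Fin n) // s.card = k} {s : Finset (Fin n) // s.card = k} ℝ :=
  fun r c => deriv (fun ε : ℝ => mulCompound k (1 + ε • A) r c) 0

open scoped Classical in
/-- Eigenvalues of a symmetric real matrix, in decreasing order (junk value `0` otherwise). -/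
noncomputable def symEigsDesc {n : ℕ} (S : Matrix (Fin n) (Fin n) ℝ) : Fin n → ℝ :=
  if hS : S.IsHermitian then
    fun i => (hS.eigenvalues ∘ Tuple.sort hS.eigenvalues) i.rev
  else 0

/-- Singular values of a real matrix in decreasing order. -/
noncomputable def singVals {m p : ℕ} (A : Matrix (Fin m) (Fin p) ℝ) : Fin p → ℝ :=
  fun i => Real.sqrt (symEigsDesc (Aᴴ * A) i)

/-- Largest eigenvalue of a (symmetric) real matrix. -/
noncomputable def lamMax {n : ℕ} (S : Matrix (Fin n) (Fin n) ℝ) : ℝ :=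
  if hn : 0 < n then symEigsDesc S ⟨0, hn⟩ else 0

/-!
Horn's log-majorization `∏_{i<j} σᵢ(AB) ≤ ∏_{i<j} σᵢ(A) σᵢ(B)` comes from determinants of
compressions. If the columns of `W` are orthonormal eigenvectors of `(AB)ᵀAB` for its top
`j` eigenvalues, then `∏_{i<j} σᵢ(AB)² = det (Wᵀ (AB)ᵀ AB W)`. By Cauchy–Binet,
`det (Vᵀ S V) ≤ (product of the top j eigenvalues of S) · det (Vᵀ V)` for positive
semidefinite `S`; applying this with `S = AᵀA, V = BW` and then with `S = BᵀB, V = W` gives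
the squared inequality. Raising to the power `s > 0` preserves log-majorization, and Weyl's
argument turns it into weak majorization: for decreasing positive `x`, the tangent-line bound
`x - y ≤ x (log x - log y)` and Abel summation against the decreasing weights `xᵢ` give
`∑ (xᵢ - yᵢ) ≤ 0`; zero terms are handled by truncation.
-/

open Finset

section CauchyBinet

variable {R ι : Type*} [CommRing R] [Fintype ι] {j : ℕ}

theorem Matrix.det_mul_eq_sum_prod_mul_det_submatrix (M : Matrix (Fin j) ι R)
    (N : Matrix ι (Fin j) R) :
    (M * N).det = ∑ f : Fin j → ι, (∏ i, N (f i) i) * (M.submatrix id f).det := by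
  have hexpand (σ : Equiv.Perm (Fin j)) :
      ∏ i, (M * N) (σ i) i = ∑ f : Fin j → ι, ∏ i, M (σ i) (f i) * N (f i) i := by
    simp only [mul_apply, prod_univ_sum, Fintype.piFinset_univ]
  simp_rw [det_apply', hexpand, mul_sum]
  rw [sum_comm]
  refine sum_congr rfl fun f _ => sum_congr rfl fun σ _ => ?_
  simp only [prod_mul_distrib, submatrix_apply, id_eq]
  ring

theorem Finset.sum_injective_eq_sum_orderEmbOfFin_comp_perm {M : Type*} [AddCommMonoid M]
    [LinearOrder ι] (F : (Fin j → ι) → M) :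
    ∑ f with Function.Injective f, F f =
      ∑ T : {s : Finset ι // s.card = j}, ∑ π : Equiv.Perm (Fin j),
        F (T.1.orderEmbOfFin T.2 ∘ π) := by
  rw [← Fintype.sum_prod_type']
  symm
  refine sum_bij (fun Tπ _ => Tπ.1.1.orderEmbOfFin Tπ.1.2 ∘ Tπ.2) ?_ ?_ ?_ fun _ _ => rfl
  · intro Tπ _
    simpa using (Tπ.1.1.orderEmbOfFin Tπ.1.2).injective.comp Tπ.2.injective
  · rintro ⟨⟨T, hT⟩, π⟩ - ⟨⟨T', hT'⟩, π'⟩ - h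
    have himage := congrArg (fun f : Fin j → ι => univ.image f) h
    simp only [← image_image, image_univ_equiv, image_orderEmbOfFin_univ] at himage
    subst himage
    have := (T.orderEmbOfFin hT).injective.comp_left h
    simp_all
  · intro f hf
    have hf : Function.Injective f := by simpa using hf
    set T := univ.image f
    have hT : T.card = j := by simp [T, card_image_of_injective _ hf]
    have hmem : ∀ a, ∃ b, T.orderEmbOfFin hT b = f a := fun a => by
      rw [← Set.mem_range, range_orderEmbOfFin]; simp [T]
    choose g hg using hmem
    have hgf : T.orderEmbOfFin hT ∘ g = f := funext hg
    have hg_inj : Function.Injective g := fun a b hab => hf (by rw [← hg a, ← hg b, hab])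
    exact ⟨(⟨T, hT⟩, Equiv.ofBijective g hg_inj.bijective_of_finite), mem_univ _, hgf⟩

theorem Matrix.det_mul_eq_sum_det_submatrix_mul_det_submatrix [LinearOrder ι]
    (M : Matrix (Fin j) ι R) (N : Matrix ι (Fin j) R) :
    (M * N).det = ∑ T : {s : Finset ι // s.card = j},
      (M.submatrix id (T.1.orderEmbOfFin T.2)).det *
        (N.submatrix (T.1.orderEmbOfFin T.2) id).det := by
  rw [det_mul_eq_sum_prod_mul_det_submatrix,
    ← sum_filter_of_ne (p := Function.Injective) fun f _ hf => ?injective,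
    sum_injective_eq_sum_orderEmbOfFin_comp_perm]
  case injective =>
    by_contra hinj
    obtain ⟨a, b, hab, hne⟩ := Function.not_injective_iff.mp hinj
    exact hf (by rw [det_zero_of_column_eq hne fun i => by simp [hab], mul_zero])
  refine sum_congr rfl fun T _ => ?_
  set e := T.1.orderEmbOfFin T.2
  rw [det_apply' (N.submatrix e id), mul_sum]
  refine sum_congr rfl fun π _ => ?_
  rw [show M.submatrix id (e ∘ π) = (M.submatrix id e).submatrix id π from rfl, det_permute']
  simp only [submatrix_apply, id_eq, Function.comp_apply]
  ring

end CauchyBinet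

lemma Matrix.det_transpose_mul_diagonal_mul_le {ι : Type*} [Fintype ι] [LinearOrder ι] {j : ℕ}
    {w : ι → ℝ} {Λ : ℝ} (hΛ : ∀ T : Finset ι, T.card = j → ∏ t ∈ T, w t ≤ Λ)
    (V : Matrix ι (Fin j) ℝ) :
    (Vᵀ * diagonal w * V).det ≤ Λ * (Vᵀ * V).det := by
  rw [Matrix.mul_assoc, det_mul_eq_sum_det_submatrix_mul_det_submatrix,
    det_mul_eq_sum_det_submatrix_mul_det_submatrix, mul_sum]
  refine sum_le_sum fun T _ => ?_
  set e := T.1.orderEmbOfFin T.2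
  have hminor : (diagonal w * V).submatrix e id = diagonal (w ∘ e) * V.submatrix e id := by
    ext
    simp [diagonal_mul]
  have hprod : ∏ a, w (e a) = ∏ t ∈ T.1, w t := by
    rw [← T.1.image_orderEmbOfFin_univ T.2, prod_image fun a _ b _ h => e.injective h]
  rw [hminor, det_mul, det_diagonal, ← transpose_submatrix, det_transpose, Function.comp_def,
    hprod, mul_left_comm]
  exact mul_le_mul_of_nonneg_right (hΛ T.1 T.2) (mul_self_nonneg _)

lemma Fin.val_le_of_strictMono {j q : ℕ} {g : Fin j → Fin q} (hg : StrictMono g) (i : Fin j) :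
    (i : ℕ) ≤ g i := by
  obtain ⟨i, hi⟩ := i
  induction i with
  | zero => exact Nat.zero_le _
  | succ i ih => exact (ih (by omega)).trans_lt (hg (Fin.mk_lt_mk.2 i.lt_succ_self))

lemma Finset.prod_le_prod_castLE_of_antitone {q j : ℕ} {w : Fin q → ℝ} (hw : Antitone w)
    (hw0 : ∀ t, 0 ≤ w t) (hjq : j ≤ q) (T : Finset (Fin q)) (hT : T.card = j) :
    ∏ t ∈ T, w t ≤ ∏ i : Fin j, w (Fin.castLE hjq i) := by
  rw [← T.image_orderEmbOfFin_univ hT, prod_image fun a _ b _ h => (T.orderEmbOfFin hT).injective h]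
  exact prod_le_prod (fun i _ => hw0 _) fun i _ =>
    hw (Fin.le_def.2 (Fin.val_le_of_strictMono (T.orderEmbOfFin hT).strictMono i))

lemma Matrix.transpose_submatrix_mul_mul_submatrix {R κ α β : Type*} [CommSemiring R]
    [Fintype κ] (M : Matrix κ α R) (N : Matrix κ κ R) (c d : β → α) :
    (M.submatrix id c)ᵀ * N * M.submatrix id d = (Mᵀ * N * M).submatrix c d := by
  ext
  simp [mul_apply, sum_mul]

section Spectral

variable {q : ℕ} {S : Matrix (Fin q) (Fin q) ℝ}

lemma symEigsDesc_eq (hS : S.IsHermitian) (i : Fin q) :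
    symEigsDesc S i = hS.eigenvalues (Tuple.sort hS.eigenvalues i.rev) := by
  rw [symEigsDesc, dif_pos hS]
  rfl

lemma symEigsDesc_antitone (hS : S.IsHermitian) : Antitone (symEigsDesc S) := by
  intro i i' h
  rw [symEigsDesc_eq hS, symEigsDesc_eq hS]
  exact Tuple.monotone_sort hS.eigenvalues (Fin.rev_le_rev.mpr h)

lemma symEigsDesc_nonneg (hS : S.PosSemidef) (i : Fin q) : 0 ≤ symEigsDesc S i := by
  rw [symEigsDesc_eq hS.1]
  exact hS.eigenvalues_nonneg _

lemma Matrix.IsHermitian.exists_orthogonal_diagonal_symEigsDesc (hS : S.IsHermitian) :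
    ∃ U : Matrix (Fin q) (Fin q) ℝ, Uᵀ * U = 1 ∧ Uᵀ * S * U = diagonal (symEigsDesc S) := by
  classical
  set U₀ : Matrix (Fin q) (Fin q) ℝ := ↑hS.eigenvectorUnitary
  have hU₀ : U₀ᵀ * U₀ = 1 := by
    simpa [star_eq_conjTranspose] using mem_unitaryGroup_iff'.mp hS.eigenvectorUnitary.2
  have hS₀ : U₀ᵀ * S * U₀ = diagonal hS.eigenvalues := by
    simpa [Unitary.conjStarAlgAut_star_apply, star_eq_conjTranspose] using
      hS.conjStarAlgAut_star_eigenvectorUnitary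
  -- reorder the eigenvectors so that the eigenvalues decrease
  let σ : Equiv.Perm (Fin q) := Fin.revPerm.trans (Tuple.sort hS.eigenvalues)
  refine ⟨U₀.submatrix id σ, ?_, ?_⟩
  · simpa [hU₀] using transpose_submatrix_mul_mul_submatrix U₀ 1 σ σ
  · rw [transpose_submatrix_mul_mul_submatrix, hS₀, submatrix_diagonal_equiv]
    congr 1
    ext i
    simp [σ, symEigsDesc_eq hS]

lemma Matrix.IsHermitian.exists_transpose_mul_self_eq_one_diagonal (hS : S.IsHermitian)
    {j : ℕ} (hjq : j ≤ q) :
    ∃ W : Matrix (Fin q) (Fin j) ℝ, Wᵀ * W = 1 ∧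
      Wᵀ * S * W = diagonal fun i => symEigsDesc S (Fin.castLE hjq i) := by
  classical
  obtain ⟨U, hU, hUSU⟩ := hS.exists_orthogonal_diagonal_symEigsDesc
  let e : Fin j ↪ Fin q := (Fin.castLEOrderEmb hjq).toEmbedding
  refine ⟨U.submatrix id e, ?_, ?_⟩
  · simpa [hU] using transpose_submatrix_mul_mul_submatrix U 1 e e
  · rw [transpose_submatrix_mul_mul_submatrix, hUSU, submatrix_diagonal_embedding]
    rfl

lemma Matrix.PosSemidef.det_transpose_mul_mul_le (hS : S.PosSemidef) {j : ℕ} (hjq : j ≤ q)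
    (W : Matrix (Fin q) (Fin j) ℝ) :
    (Wᵀ * S * W).det ≤ (∏ i : Fin j, symEigsDesc S (Fin.castLE hjq i)) * (Wᵀ * W).det := by
  obtain ⟨U, hU, hUSU⟩ := hS.1.exists_orthogonal_diagonal_symEigsDesc
  have hU' : U * Uᵀ = 1 := mul_eq_one_comm.mp hU
  have hS_eq : Wᵀ * S * W = (Uᵀ * W)ᵀ * diagonal (symEigsDesc S) * (Uᵀ * W) := by
    rw [← hUSU]
    simp only [transpose_mul, transpose_transpose, Matrix.mul_assoc]
    rw [← Matrix.mul_assoc U Uᵀ, hU', Matrix.one_mul, ← Matrix.mul_assoc U Uᵀ, hU', Matrix.one_mul]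
  have hgram : Wᵀ * W = (Uᵀ * W)ᵀ * (Uᵀ * W) := by
    rw [transpose_mul, transpose_transpose, Matrix.mul_assoc, ← Matrix.mul_assoc U, hU',
      Matrix.one_mul]
  rw [hS_eq, hgram]
  exact det_transpose_mul_diagonal_mul_le (fun T hT => prod_le_prod_castLE_of_antitone
    (symEigsDesc_antitone hS.1) (symEigsDesc_nonneg hS) hjq T hT) _

end Spectral

section SingularValues

variable {m p n : ℕ}

lemma singVals_nonneg (M : Matrix (Fin m) (Fin p) ℝ) (i : Fin p) : 0 ≤ singVals M i :=
  Real.sqrt_nonneg _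

lemma Matrix.posSemidef_transpose_mul_self {ι κ : Type*} [Fintype ι] [Fintype κ]
    (M : Matrix ι κ ℝ) :
    (Mᵀ * M).PosSemidef := by
  simpa using posSemidef_conjTranspose_mul_self M

lemma singVals_sq (M : Matrix (Fin m) (Fin p) ℝ) (i : Fin p) :
    singVals M i ^ 2 = symEigsDesc (Mᵀ * M) i := by
  simpa [singVals] using Real.sq_sqrt (symEigsDesc_nonneg (posSemidef_transpose_mul_self M) i)

lemma singVals_antitone (M : Matrix (Fin m) (Fin p) ℝ) : Antitone (singVals M) := fun _ _ h =>
  Real.sqrt_le_sqrt (symEigsDesc_antitone (posSemidef_conjTranspose_mul_self M).1 h)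

lemma prod_symEigsDesc_transpose_mul_self_mul_le {j : ℕ} (hjp : j ≤ p) (hjn : j ≤ n)
    (A : Matrix (Fin m) (Fin p) ℝ) (B : Matrix (Fin p) (Fin n) ℝ) :
    ∏ i : Fin j, symEigsDesc ((A * B)ᵀ * (A * B)) (Fin.castLE hjn i) ≤
      (∏ i : Fin j, symEigsDesc (Aᵀ * A) (Fin.castLE hjp i)) *
        ∏ i : Fin j, symEigsDesc (Bᵀ * B) (Fin.castLE hjn i) := by
  obtain ⟨W, hWW, hW⟩ :=
    (posSemidef_transpose_mul_self (A * B)).1.exists_transpose_mul_self_eq_one_diagonal hjn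
  have hA := (posSemidef_transpose_mul_self A).det_transpose_mul_mul_le hjp (B * W)
  have hB := (posSemidef_transpose_mul_self B).det_transpose_mul_mul_le hjn W
  have hA0 : 0 ≤ ∏ i : Fin j, symEigsDesc (Aᵀ * A) (Fin.castLE hjp i) :=
    prod_nonneg fun i _ => symEigsDesc_nonneg (posSemidef_transpose_mul_self A) _
  calc ∏ i : Fin j, symEigsDesc ((A * B)ᵀ * (A * B)) (Fin.castLE hjn i)
      = (Wᵀ * ((A * B)ᵀ * (A * B)) * W).det := by rw [hW, det_diagonal]
    _ = ((B * W)ᵀ * (Aᵀ * A) * (B * W)).det := by simp only [transpose_mul, Matrix.mul_assoc]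
    _ ≤ (∏ i : Fin j, symEigsDesc (Aᵀ * A) (Fin.castLE hjp i)) * (Wᵀ * (Bᵀ * B) * W).det := by
      simpa only [transpose_mul, Matrix.mul_assoc] using hA
    _ ≤ _ := by
      rw [hWW, det_one, mul_one] at hB
      exact mul_le_mul_of_nonneg_left hB hA0

theorem prod_singVals_mul_le {j : ℕ} (hjp : j ≤ p) (hjn : j ≤ n)
    (A : Matrix (Fin m) (Fin p) ℝ) (B : Matrix (Fin p) (Fin n) ℝ) :
    ∏ i : Fin j, singVals (A * B) (Fin.castLE hjn i) ≤
      ∏ i : Fin j, singVals A (Fin.castLE hjp i) * singVals B (Fin.castLE hjn i) := by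
  rw [← pow_le_pow_iff_left₀ (prod_nonneg fun _ _ => singVals_nonneg _ _)
    (prod_nonneg fun _ _ => mul_nonneg (singVals_nonneg _ _) (singVals_nonneg _ _)) two_ne_zero]
  simpa only [← prod_pow, mul_pow, prod_mul_distrib, singVals_sq] using
    prod_symEigsDesc_transpose_mul_self_mul_le hjp hjn A B

end SingularValues

section WeakMajorization

lemma Real.sub_le_mul_log_sub_log {x y : ℝ} (hx : 0 < x) (hy : 0 < y) :
    x - y ≤ x * (Real.log x - Real.log y) := by
  have h := mul_le_mul_of_nonneg_left (Real.log_le_sub_one_of_pos (div_pos hy hx)) hx.le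
  rw [Real.log_div hy.ne' hx.ne', mul_sub_one, mul_div_cancel₀ y hx.ne'] at h
  linarith

lemma sum_range_mul_nonpos_of_antitone {c d : ℕ → ℝ} (hc : Antitone c) {k : ℕ}
    (hc0 : ∀ i < k, 0 ≤ c i) (hd : ∀ j ≤ k, ∑ i ∈ range j, d i ≤ 0) :
    ∑ i ∈ range k, c i * d i ≤ 0 := by
  have hlast : c (k - 1) * ∑ i ∈ range k, d i ≤ 0 := by
    rcases k with _ | k
    · simp
    · exact mul_nonpos_of_nonneg_of_nonpos (hc0 k k.lt_succ_self) (hd _ le_rfl)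
  have hsteps : 0 ≤ ∑ i ∈ range (k - 1), (c (i + 1) - c i) * ∑ l ∈ range (i + 1), d l :=
    sum_nonneg fun i hi => mul_nonneg_of_nonpos_of_nonpos (sub_nonpos.2 (hc i.le_succ))
      (hd _ (by rw [mem_range] at hi; omega))
  have := sum_range_by_parts c d k
  simp only [smul_eq_mul] at this
  linarith

lemma sum_range_le_of_prod_range_le_of_pos {x y : ℕ → ℝ} (hx : Antitone x) {k : ℕ}
    (hx0 : ∀ i < k, 0 < x i) (hy0 : ∀ i < k, 0 < y i)
    (h : ∀ j ≤ k, ∏ i ∈ range j, x i ≤ ∏ i ∈ range j, y i) :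
    ∑ i ∈ range k, x i ≤ ∑ i ∈ range k, y i := by
  have hlog : ∀ j ≤ k, ∑ i ∈ range j, (Real.log (x i) - Real.log (y i)) ≤ 0 := fun j hj => by
    have hx0' : ∀ i ∈ range j, 0 < x i := fun i hi => hx0 i ((mem_range.1 hi).trans_le hj)
    have hy0' : ∀ i ∈ range j, 0 < y i := fun i hi => hy0 i ((mem_range.1 hi).trans_le hj)
    rw [sum_sub_distrib, ← Real.log_prod fun i hi => (hx0' i hi).ne',
      ← Real.log_prod fun i hi => (hy0' i hi).ne', sub_nonpos]
    exact Real.log_le_log (prod_pos hx0') (h j hj)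
  have htangent : ∑ i ∈ range k, (x i - y i) ≤
      ∑ i ∈ range k, x i * (Real.log (x i) - Real.log (y i)) :=
    sum_le_sum fun i hi =>
      Real.sub_le_mul_log_sub_log (hx0 i (mem_range.1 hi)) (hy0 i (mem_range.1 hi))
  have := sum_range_mul_nonpos_of_antitone hx (fun i hi => (hx0 i hi).le) hlog
  rw [sum_sub_distrib] at htangent
  linarith

theorem sum_range_le_of_prod_range_le {x y : ℕ → ℝ} (hx : Antitone x) (hx0 : ∀ i, 0 ≤ x i)
    (hy0 : ∀ i, 0 ≤ y i) {k : ℕ} (h : ∀ j ≤ k, ∏ i ∈ range j, x i ≤ ∏ i ∈ range j, y i) :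
    ∑ i ∈ range k, x i ≤ ∑ i ∈ range k, y i := by
  induction k with
  | zero => simp
  | succ k ih =>
    rcases (hx0 k).eq_or_lt with hxk | hxk
    · rw [sum_range_succ, sum_range_succ, ← hxk]
      linarith [ih fun j hj => h j (hj.trans k.le_succ), hy0 k]
    · -- once `x k > 0`, all earlier `x i` are positive, and the products force every `y i > 0`
      have hxpos : ∀ i < k + 1, 0 < x i := fun i hi => hxk.trans_le (hx (by omega))
      have hprod : 0 < ∏ i ∈ range (k + 1), y i :=
        (prod_pos fun i hi => hxpos i (mem_range.1 hi)).trans_le (h _ le_rfl)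
      have hypos : ∀ i < k + 1, 0 < y i := fun i hi =>
        (hy0 i).lt_of_ne fun hyi => hprod.ne' (prod_eq_zero (mem_range.2 hi) hyi.symm)
      exact sum_range_le_of_prod_range_le_of_pos hx hxpos hypos h

theorem Fin.sum_le_sum_of_prod_le_prod {k : ℕ} {f g : Fin k → ℝ} (hf : Antitone f)
    (hf0 : ∀ i, 0 ≤ f i) (hg0 : ∀ i, 0 ≤ g i)
    (h : ∀ j (hj : j ≤ k), ∏ i : Fin j, f (Fin.castLE hj i) ≤ ∏ i : Fin j, g (Fin.castLE hj i)) :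
    ∑ i, f i ≤ ∑ i, g i := by
  let extend (u : Fin k → ℝ) (i : ℕ) : ℝ := if hi : i < k then u ⟨i, hi⟩ else 0
  have hsum (u : Fin k → ℝ) : ∑ i, u i = ∑ i ∈ range k, extend u i := by
    rw [← Fin.sum_univ_eq_sum_range]
    simp [extend]
  have hprod (u : Fin k → ℝ) (j : ℕ) (hj : j ≤ k) :
      ∏ i : Fin j, u (Fin.castLE hj i) = ∏ i ∈ range j, extend u i := by
    rw [← Fin.prod_univ_eq_prod_range]
    exact prod_congr rfl fun i _ => by simp only [extend, dif_pos (i.2.trans_le hj)]; rfl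
  rw [hsum f, hsum g]
  refine sum_range_le_of_prod_range_le (fun a b hab => ?_) (fun i => ?_) (fun i => ?_)
    fun j hj => by simpa only [hprod _ j hj] using h j hj
  · simp only [extend]
    split_ifs with hb ha ha
    · exact hf (Fin.mk_le_mk.2 hab)
    · omega
    · exact hf0 _
    · exact le_rfl
  · simp only [extend]; split_ifs <;> simp [hf0]
  · simp only [extend]; split_ifs <;> simp [hg0]

end WeakMajorization

theorem stmt15_general {m p n k : ℕ} (hkp : k ≤ p) (hkn : k ≤ n)
    (A : Matrix (Fin m) (Fin p) ℝ) (B : Matrix (Fin p) (Fin n) ℝ) (s : ℝ) (hs : 0 < s) :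
    ∑ i : Fin k, (singVals (A * B) (Fin.castLE hkn i)) ^ s ≤
      ∑ i : Fin k, (singVals A (Fin.castLE hkp i) * singVals B (Fin.castLE hkn i)) ^ s := by
  refine Fin.sum_le_sum_of_prod_le_prod (fun i i' hii' => ?_) (fun i => ?_) (fun i => ?_)
    fun j hj => ?_
  · exact Real.rpow_le_rpow (singVals_nonneg _ _)
      (singVals_antitone _ ((Fin.castLE_le_castLE_iff _).2 hii')) hs.le
  · exact Real.rpow_nonneg (singVals_nonneg _ _) s
  · exact Real.rpow_nonneg (mul_nonneg (singVals_nonneg _ _) (singVals_nonneg _ _)) s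
  · simp only [Fin.castLE_castLE]
    rw [Real.finsetProd_rpow _ _ fun i _ => singVals_nonneg _ _,
      Real.finsetProd_rpow _ _ fun i _ => mul_nonneg (singVals_nonneg _ _) (singVals_nonneg _ _)]
    exact Real.rpow_le_rpow (prod_nonneg fun i _ => singVals_nonneg _ _)
      (prod_singVals_mul_le (hj.trans hkp) (hj.trans hkn) A B) hs.le

/-- Horn-type inequality: `∑_{i=1}^k σ_i^s(AB) ≤ ∑_{i=1}^k (σ_i(A) σ_i(B))^s`. -/
theorem stmt15 {m p n k : ℕ} (hk1 : 1 ≤ k) (hkm : k ≤ m) (hkp : k ≤ p) (hkn : k ≤ n)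
    (A : Matrix (Fin m) (Fin p) ℝ) (B : Matrix (Fin p) (Fin n) ℝ) (s : ℝ) (hs : 0 < s) :
    ∑ i : Fin k, (singVals (A * B) (Fin.castLE hkn i)) ^ s ≤
      ∑ i : Fin k, (singVals A (Fin.castLE hkp i) * singVals B (Fin.castLE hkn i)) ^ s :=
  stmt15_general hkp hkn A B s hs
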